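/- Let w ∈ S_n with R(w) row-strict, i = w(n), and w = vy the canonical factorization. Every element g_n ∈ B_n(w) can be factored uniquely as g_n = u_i · b_n, where u_i lies in the subgroup U_i of unipotent upper triangular matrices supported in row i (u ∈ U with u_{kj} = 0 for all k ≠ i with k < j), b_n ∈ vU_0v⁻¹ (with U_0 the unipotent upper triangular matrices in GL_{n−1} embedded in GL_n), and the i-th row of u_i equals the i-th row of g_n. -/

import Mathlib

open Matrix

attribute [local instance] Classical.propDecidable

noncomputable section

/-- Label of the box in row `i` (0-indexed from the top), column `j` (0-indexed) of the base
filling of the weak composition `lam`: columns filled left to right, each column bottom to top,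
labels `1,…,n`. -/
def baseLabel (lam : List ℕ) (i j : ℕ) : ℕ :=
  (∑ i' ∈ Finset.range lam.length, min (lam.getD i' 0) j) +
    ((Finset.Ico i lam.length).filter (fun i' => j < lam.getD i' 0)).card

def IsBox (lam : List ℕ) (i j : ℕ) : Prop :=
  i < lam.length ∧ j < lam.getD i 0

/-- The nilpotent matrix `X_λ = Σ E_{ℓ r}` over pairs where the box labeled `r` is directly right
of the box labeled `ℓ` in the base filling (labels are 1-indexed; matrix indices 0-indexed). -/
def Xlam (n : ℕ) (lam : List ℕ) : Matrix (Fin n) (Fin n) ℂ :=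
  fun ℓ r => if (∃ i j, IsBox lam i (j+1) ∧ baseLabel lam i j = (ℓ : ℕ) + 1 ∧
      baseLabel lam i (j+1) = (r : ℕ) + 1) then 1 else 0

def IsFullFlag (n : ℕ) (V : ℕ → Submodule ℂ (Fin n → ℂ)) : Prop :=
  V 0 = ⊥ ∧ (∀ i, V i ≤ V (i+1)) ∧ ∀ i, i ≤ n → Module.finrank ℂ (V i) = i

def InHess (n : ℕ) (X : Matrix (Fin n) (Fin n) ℂ) (h : ℕ → ℕ)
    (V : ℕ → Submodule ℂ (Fin n → ℂ)) : Prop :=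
  ∀ i, i ≤ n → ∀ v ∈ V i, X.mulVec v ∈ V (h i)

/-- The flag `wE_•`, whose `k`-th space is spanned by `e_{w(1)},…,e_{w(k)}` (0-indexed). -/
def permFlag (n : ℕ) (w : Equiv.Perm (Fin n)) : ℕ → Submodule ℂ (Fin n → ℂ) :=
  fun k => Submodule.span ℂ {v | ∃ j : Fin n, (j : ℕ) < k ∧ v = Pi.single (w j) (1 : ℂ)}

/-- The flag whose `k`-th space is spanned by the first `k` columns of `g`. -/
def matFlag (n : ℕ) (g : Matrix (Fin n) (Fin n) ℂ) : ℕ → Submodule ℂ (Fin n → ℂ) :=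
  fun k => Submodule.span ℂ {c | ∃ j : Fin n, (j : ℕ) < k ∧ c = fun a => g a j}

def permMat (n : ℕ) (σ : Equiv.Perm (Fin n)) : Matrix (Fin n) (Fin n) ℂ :=
  fun a b => if σ b = a then 1 else 0

def invSet (n : ℕ) (w : Equiv.Perm (Fin n)) : Finset (Fin n × Fin n) :=
  Finset.univ.filter (fun p => p.2 < p.1 ∧ w p.1 < w p.2)

def blen (n : ℕ) (w : Equiv.Perm (Fin n)) : ℕ := (invSet n w).card

open Fin.NatCast in
/-- `v = s_i s_{i+1} ⋯ s_{n-1}` (0-indexed simple transpositions `swap j (j+1)`). -/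
def vPerm (n : ℕ) (i : ℕ) : Equiv.Perm (Fin (n+1)) :=
  ((List.Ico i n).map (fun j : ℕ => Equiv.swap (j : Fin (n+1)) ((j+1 : ℕ) : Fin (n+1)))).prod

/-- `R(w)` is row-strict: the entry in the box labeled `m` of the base filling is `w⁻¹(m)`,
so entry `p` (0-indexed) occupies the box whose base label is `w(p)+1`. -/
def RowStrictT (n : ℕ) (lam : List ℕ) (w : Equiv.Perm (Fin n)) : Prop :=
  ∀ i j, IsBox lam i (j+1) → ∀ p q : Fin n,
    (w p : ℕ) + 1 = baseLabel lam i j → (w q : ℕ) + 1 = baseLabel lam i (j+1) → p < q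

def HStrictT (n : ℕ) (lam : List ℕ) (h : ℕ → ℕ) (w : Equiv.Perm (Fin n)) : Prop :=
  ∀ i j, IsBox lam i (j+1) → ∀ p q : Fin n,
    (w p : ℕ) + 1 = baseLabel lam i j → (w q : ℕ) + 1 = baseLabel lam i (j+1) →
      (p : ℕ) + 1 ≤ h ((q : ℕ) + 1)

/-- `(k,ℓ)` is a Hessenberg inversion of `R(w)` (entries 0-indexed: values are index+1). -/
def HessInvT (n : ℕ) (lam : List ℕ) (h : ℕ → ℕ) (w : Equiv.Perm (Fin n)) (k ℓ : Fin n) : Prop :=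
  ℓ < k ∧ ∃ ik jk il jl : ℕ, IsBox lam ik jk ∧ IsBox lam il jl ∧
    baseLabel lam ik jk = (w k : ℕ) + 1 ∧ baseLabel lam il jl = (w ℓ : ℕ) + 1 ∧
    (jk < jl ∨ (jk = jl ∧ il < ik)) ∧
    (∀ r : Fin n, IsBox lam il (jl + 1) → (w r : ℕ) + 1 = baseLabel lam il (jl + 1) →
      (k : ℕ) + 1 ≤ h ((r : ℕ) + 1))

/-- Springer inversions: Hessenberg inversions for `h = (0,1,…,n-1)`, i.e. `h(i) = i - 1`. -/
def SpringerInvT (n : ℕ) (lam : List ℕ) (w : Equiv.Perm (Fin n)) (k ℓ : Fin n) : Prop :=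
  HessInvT n lam (fun m => m - 1) w k ℓ

/-- The box labeled `b+1` is directly right of the box labeled `a+1` in the base filling. -/
def RightNbr (lam : List ℕ) (a b : ℕ) : Prop :=
  ∃ i j, IsBox lam i (j+1) ∧ baseLabel lam i j = a + 1 ∧ baseLabel lam i (j+1) = b + 1

/-- The box labeled `a+1` is at the end of its row in the base filling. -/
def EndOfRow (lam : List ℕ) (a : ℕ) : Prop :=
  ∃ i j, IsBox lam i j ∧ ¬ IsBox lam i (j+1) ∧ baseLabel lam i j = a + 1

def IsUpperUnip (n : ℕ) (g : Matrix (Fin n) (Fin n) ℂ) : Prop :=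
  (∀ i, g i i = 1) ∧ ∀ i j : Fin n, j < i → g i j = 0

/-- `U_i`: upper unipotent matrices whose off-diagonal entries are supported in row `i`. -/
def InUi (n : ℕ) (i : Fin n) (g : Matrix (Fin n) (Fin n) ℂ) : Prop :=
  IsUpperUnip n g ∧ ∀ a b : Fin n, a ≠ b → g a b ≠ 0 → a = i

/-- `U_0`: upper unipotent matrices of `GL_n` embedded in `GL_{n+1}` (last column trivial). -/
def InU0 (n : ℕ) (g : Matrix (Fin (n+1)) (Fin (n+1)) ℂ) : Prop :=
  IsUpperUnip (n+1) g ∧ ∀ a : Fin (n+1), a ≠ Fin.last n → g a (Fin.last n) = 0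

/-- The element of `B_k(w)` with coordinates `x`: it sends `e_{w(j)} = X_λ^m e_{w(ℓ)}` to
`e_{w(j)} + x ℓ • X_λ^m e_{w(k)}` for Springer inversions `(k,ℓ)`, fixing all other `e_{w(j)}`. -/
def BkMat (n : ℕ) (lam : List ℕ) (w : Equiv.Perm (Fin n)) (k : Fin n) (x : Fin n → ℂ) :
    Matrix (Fin n) (Fin n) ℂ :=
  1 + ∑ ℓ : Fin n, if SpringerInvT n lam w k ℓ then
      x ℓ • (∑ m ∈ Finset.range n,
        (Xlam n lam) ^ m * Matrix.single (w k) (w ℓ) (1 : ℂ) * ((Xlam n lam)ᵀ) ^ m)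
    else 0

/-- The product `g_n g_{n-1} ⋯ g_2` of elements `g_k ∈ B_k(w)` with coordinates `x k`. -/
def bigB (n : ℕ) (lam : List ℕ) (w : Equiv.Perm (Fin n)) (x : Fin n → Fin n → ℂ) :
    Matrix (Fin n) (Fin n) ℂ :=
  ((List.ofFn (fun k : Fin n => BkMat n lam w k (x k))).reverse).prod

/- Abstract fillings `T : row → column → value` of the diagram of `lam`, values in `[1, n]`. -/

def RowStrictF (lam : List ℕ) (T : ℕ → ℕ → ℕ) : Prop :=
  ∀ i j, IsBox lam i (j+1) → T i j < T i (j+1)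

def HStrictF (lam : List ℕ) (h : ℕ → ℕ) (T : ℕ → ℕ → ℕ) : Prop :=
  ∀ i j, IsBox lam i (j+1) → T i j ≤ h (T i (j+1))

def GoodFilling (lam : List ℕ) (T : ℕ → ℕ → ℕ) : Prop :=
  (∀ i j, IsBox lam i j → 1 ≤ T i j ∧ T i j ≤ lam.sum) ∧
  (∀ m, 1 ≤ m → m ≤ lam.sum → ∃ i j, IsBox lam i j ∧ T i j = m) ∧
  (∀ i j i' j', IsBox lam i j → IsBox lam i' j' → T i j = T i' j' → i = i' ∧ j = j')

def HessInvF (lam : List ℕ) (h : ℕ → ℕ) (T : ℕ → ℕ → ℕ) (k ℓ : ℕ) : Prop :=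
  ℓ < k ∧ ∃ ik jk il jl : ℕ, IsBox lam ik jk ∧ IsBox lam il jl ∧
    T ik jk = k ∧ T il jl = ℓ ∧
    (jk < jl ∨ (jk = jl ∧ il < ik)) ∧
    (IsBox lam il (jl + 1) → k ≤ h (T il (jl + 1)))

/-- `S` is obtained from `T` by sorting each column increasingly from top to bottom:
same column entries (as sets, entries being distinct), with columns of `S` increasing. -/
def ColSortedOf (lam : List ℕ) (T S : ℕ → ℕ → ℕ) : Prop :=
  (∀ j m, (∃ i, IsBox lam i j ∧ T i j = m) ↔ (∃ i, IsBox lam i j ∧ S i j = m)) ∧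
  (∀ i j, IsBox lam i j → IsBox lam (i+1) j → S i j < S (i+1) j)

def IsPartitionL (lam : List ℕ) : Prop :=
  ∀ i i', i ≤ i' → lam.getD i' 0 ≤ lam.getD i 0

def hessInvCount (lam : List ℕ) (h : ℕ → ℕ) (T : ℕ → ℕ → ℕ) : ℕ :=
  (((Finset.range (lam.sum + 1)) ×ˢ (Finset.range (lam.sum + 1))).filter
    (fun p => HessInvF lam h T p.1 p.2)).card

def Hspace (n : ℕ) (h : ℕ → ℕ) : Submodule ℂ (Matrix (Fin n) (Fin n) ℂ) :=
  Submodule.span ℂ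
    {A | ∃ i j : Fin n, (i : ℕ) + 1 ≤ h ((j : ℕ) + 1) ∧ A = Matrix.single i j (1 : ℂ)}

/-- Left-nested iterated bracket `[f (m), [f (m-1), [⋯ [f 1, f 0]]]]`. -/
def iterBr (n : ℕ) (f : ℕ → Matrix (Fin n) (Fin n) ℂ) : ℕ → Matrix (Fin n) (Fin n) ℂ
  | 0 => f 0
  | (m+1) => f (m+1) * iterBr n f m - iterBr n f m * f (m+1)

/-!
Write `g = BkMat = 1 + A + B`, where `A = bkHead` collects the `m = 0` terms `x ℓ E_{i, w ℓ}`
(all in row `i = w n`) and `B = bkTail` their conjugates by `X_λ^m`, `m ≥ 1`. For a Springer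
inversion `(n, ℓ)` the box of `w ℓ` ends its row, so no row of `B` is a column of `A`: `A B = 0`
and `g = (1 + A)(1 + B)`. The base filling makes `B` strictly upper triangular with vanishing
row `i`, and row strictness of `R(w)` kills its column `i`; since `v` sends `n` to `i` and keeps
the other indices in order, `v⁻¹ (1 + B) v` lies in `U_0`. Uniqueness holds because an element of
`U_i` is determined by its row `i` and is invertible.
-/

def cellsBeforeCol (lam : List ℕ) (j : ℕ) : ℕ :=
  ∑ i' ∈ Finset.range lam.length, min (lam.getD i' 0) j

def cellsInColFrom (lam : List ℕ) (i j : ℕ) : ℕ :=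
  ((Finset.Ico i lam.length).filter (fun i' => j < lam.getD i' 0)).card

lemma baseLabel_eq (lam : List ℕ) (i j : ℕ) :
    baseLabel lam i j = cellsBeforeCol lam j + cellsInColFrom lam i j := rfl

lemma isBox_of_le {lam : List ℕ} {i j j' : ℕ} (h : IsBox lam i j') (hj : j ≤ j') :
    IsBox lam i j :=
  ⟨h.1, lt_of_le_of_lt hj h.2⟩

lemma cellsBeforeCol_succ (lam : List ℕ) (j : ℕ) :
    cellsBeforeCol lam (j + 1) = cellsBeforeCol lam j + cellsInColFrom lam 0 j := by
  rw [cellsBeforeCol, cellsBeforeCol, cellsInColFrom, ← Finset.range_eq_Ico, Finset.card_filter,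
    ← Finset.sum_add_distrib]
  refine Finset.sum_congr rfl fun i' _ => ?_
  split_ifs <;> omega

lemma cellsBeforeCol_mono (lam : List ℕ) : Monotone (cellsBeforeCol lam) :=
  fun _ _ h => Finset.sum_le_sum fun _ _ => min_le_min le_rfl h

lemma cellsBeforeCol_le_sum (lam : List ℕ) (j : ℕ) : cellsBeforeCol lam j ≤ lam.sum := by
  have hsum : ∑ i' ∈ Finset.range lam.length, lam.getD i' 0 = lam.sum := by
    induction lam with
    | nil => simp
    | cons a l ih =>
      rw [List.length_cons, Finset.sum_range_succ', List.sum_cons]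
      simp only [List.getD_cons_succ, List.getD_cons_zero, ih, add_comm]
  exact hsum ▸ Finset.sum_le_sum fun _ _ => min_le_left _ _

lemma one_le_cellsInColFrom {lam : List ℕ} {i j : ℕ} (h : IsBox lam i j) :
    1 ≤ cellsInColFrom lam i j :=
  Finset.card_pos.2 ⟨i, Finset.mem_filter.2 ⟨Finset.mem_Ico.2 ⟨le_rfl, h.1⟩, h.2⟩⟩

lemma cellsInColFrom_lt {lam : List ℕ} {i i' j : ℕ} (h : IsBox lam i j) (hi : i < i') :
    cellsInColFrom lam i' j < cellsInColFrom lam i j := by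
  refine Finset.card_lt_card ((Finset.ssubset_iff_of_subset
    (Finset.filter_subset_filter _ (Finset.Ico_subset_Ico hi.le le_rfl))).2 ?_)
  exact ⟨i, Finset.mem_filter.2 ⟨Finset.mem_Ico.2 ⟨le_rfl, h.1⟩, h.2⟩,
    fun hmem => by have := (Finset.mem_Ico.1 (Finset.mem_filter.1 hmem).1).1; omega⟩

lemma baseLabel_le_cellsBeforeCol_succ (lam : List ℕ) (i j : ℕ) :
    baseLabel lam i j ≤ cellsBeforeCol lam (j + 1) := by
  rw [baseLabel_eq, cellsBeforeCol_succ]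
  exact Nat.add_le_add_left (Finset.card_le_card (Finset.filter_subset_filter _
    (Finset.Ico_subset_Ico (Nat.zero_le _) le_rfl))) _

lemma one_le_baseLabel {lam : List ℕ} {i j : ℕ} (h : IsBox lam i j) : 1 ≤ baseLabel lam i j :=
  (one_le_cellsInColFrom h).trans (Nat.le_add_left _ _)

lemma baseLabel_le_sum (lam : List ℕ) (i j : ℕ) : baseLabel lam i j ≤ lam.sum :=
  (baseLabel_le_cellsBeforeCol_succ lam i j).trans (cellsBeforeCol_le_sum lam _)

lemma baseLabel_lt_of_col_lt {lam : List ℕ} {i i' j j' : ℕ} (h : IsBox lam i' j')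
    (hj : j < j') :
    baseLabel lam i j < baseLabel lam i' j' := by
  have h1 := baseLabel_le_cellsBeforeCol_succ lam i j
  have h2 := cellsBeforeCol_mono lam (show j + 1 ≤ j' from hj)
  have h3 := one_le_cellsInColFrom h
  rw [baseLabel_eq lam i' j']
  omega

lemma baseLabel_lt_of_row_lt {lam : List ℕ} {i i' j : ℕ} (h : IsBox lam i j) (hi : i < i') :
    baseLabel lam i' j < baseLabel lam i j :=
  Nat.add_lt_add_left (cellsInColFrom_lt h hi) _

lemma baseLabel_injOn {lam : List ℕ} {i j i' j' : ℕ} (h : IsBox lam i j) (h' : IsBox lam i' j')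
    (he : baseLabel lam i j = baseLabel lam i' j') : i = i' ∧ j = j' := by
  rcases Nat.lt_trichotomy j j' with hj | rfl | hj
  · exact absurd he (baseLabel_lt_of_col_lt h' hj).ne
  · rcases Nat.lt_trichotomy i i' with hi | rfl | hi
    · exact absurd he (baseLabel_lt_of_row_lt h hi).ne'
    · exact ⟨rfl, rfl⟩
    · exact absurd he (baseLabel_lt_of_row_lt h' hi).ne
  · exact absurd he (baseLabel_lt_of_col_lt h hj).ne'

lemma rightNbr_of_Xlam_apply_ne_zero {N : ℕ} {lam : List ℕ} {a b : Fin N}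
    (h : Xlam N lam a b ≠ 0) : RightNbr lam a b := by
  by_contra hr
  exact h (if_neg hr)

lemma exists_of_Xlam_pow_succ_apply_ne_zero {N : ℕ} {lam : List ℕ} (m : ℕ) {a b : Fin N}
    (h : (Xlam N lam ^ (m + 1)) a b ≠ 0) :
    ∃ i j, IsBox lam i (j + (m + 1)) ∧ baseLabel lam i j = a + 1 ∧
      baseLabel lam i (j + (m + 1)) = b + 1 := by
  induction m generalizing b with
  | zero => simpa [RightNbr] using rightNbr_of_Xlam_apply_ne_zero (pow_one (Xlam N lam) ▸ h)
  | succ m ih =>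
    rw [pow_succ, Matrix.mul_apply] at h
    obtain ⟨c, -, hc⟩ := Finset.exists_ne_zero_of_sum_ne_zero h
    obtain ⟨i, j, hbox, hl, hl'⟩ := ih (left_ne_zero_of_mul hc)
    obtain ⟨i', j', hbox', hr, hr'⟩ := rightNbr_of_Xlam_apply_ne_zero (right_ne_zero_of_mul hc)
    obtain ⟨rfl, rfl⟩ :=
      baseLabel_injOn hbox (isBox_of_le hbox' (Nat.le_succ _)) (hl'.trans hr.symm)
    exact ⟨i, j, hbox', hl, hr'⟩

lemma lt_of_Xlam_pow_succ_apply_ne_zero {N : ℕ} {lam : List ℕ} {m : ℕ} {a b : Fin N}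
    (h : (Xlam N lam ^ (m + 1)) a b ≠ 0) : a < b := by
  obtain ⟨i, j, hbox, hl, hl'⟩ := exists_of_Xlam_pow_succ_apply_ne_zero m h
  have := baseLabel_lt_of_col_lt (i := i) hbox (Nat.lt_add_of_pos_right m.succ_pos)
  rw [Fin.lt_def]
  omega

lemma exists_apply_eq_baseLabel {N : ℕ} {lam : List ℕ} (hN : lam.sum ≤ N)
    (w : Equiv.Perm (Fin N)) {i j : ℕ} (h : IsBox lam i j) :
    ∃ p, (w p : ℕ) + 1 = baseLabel lam i j := by
  have h1 := one_le_baseLabel h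
  have h2 := baseLabel_le_sum lam i j
  exact ⟨w.symm ⟨baseLabel lam i j - 1, by omega⟩, by simp; omega⟩

lemma RowStrictT.lt_of_col_lt {N : ℕ} {lam : List ℕ} {w : Equiv.Perm (Fin N)}
    (hrs : RowStrictT N lam w) (hN : lam.sum ≤ N) {i j j' : ℕ} (hj : j < j')
    (h : IsBox lam i j') {p q : Fin N} (hp : (w p : ℕ) + 1 = baseLabel lam i j)
    (hq : (w q : ℕ) + 1 = baseLabel lam i j') : p < q := by
  induction j', hj using Nat.le_induction generalizing q with
  | base => exact hrs i j h p q hp hq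
  | succ j' hj ih =>
    have hmid := isBox_of_le h (Nat.le_succ j')
    obtain ⟨r, hr⟩ := exists_apply_eq_baseLabel hN w hmid
    exact (ih hmid hr).trans (hrs i j' h r q hr hq)

section HessInv

variable {N : ℕ} {lam : List ℕ} {h : ℕ → ℕ} {w : Equiv.Perm (Fin N)} {k ℓ : Fin N}

lemma HessInvT.apply_lt (hkl : HessInvT N lam h w k ℓ) : w k < w ℓ := by
  obtain ⟨-, ik, jk, il, jl, -, hl, labk, labl, hpos, -⟩ := hkl
  rw [Fin.lt_def]
  rcases hpos with hj | ⟨rfl, hi⟩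
  · have := baseLabel_lt_of_col_lt (i := ik) hl hj
    omega
  · have := baseLabel_lt_of_row_lt hl hi
    omega

lemma HessInvT.lt_of_Xlam_pow_succ_apply_ne_zero (hkl : HessInvT N lam h w k ℓ) {m : ℕ}
    {a b : Fin N} (ha : (Xlam N lam ^ (m + 1)) a (w k) ≠ 0)
    (hb : (Xlam N lam ^ (m + 1)) b (w ℓ) ≠ 0) : a < b := by
  obtain ⟨i, j, hbox, ha₀, ha₁⟩ := exists_of_Xlam_pow_succ_apply_ne_zero m ha
  obtain ⟨i', j', hbox', hb₀, hb₁⟩ := exists_of_Xlam_pow_succ_apply_ne_zero m hb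
  obtain ⟨-, ik, jk, il, jl, hk, hl, labk, labl, hpos, -⟩ := hkl
  obtain ⟨rfl, hjk⟩ := baseLabel_injOn hbox hk (ha₁.trans labk.symm)
  obtain ⟨rfl, hjl⟩ := baseLabel_injOn hbox' hl (hb₁.trans labl.symm)
  rw [Fin.lt_def]
  rcases hpos with hj | ⟨hj, hi⟩
  · have := baseLabel_lt_of_col_lt (i := i) (isBox_of_le hbox' (Nat.le_add_right _ _))
      (show j < j' by omega)
    omega
  · obtain rfl : j = j' := by omega
    have := baseLabel_lt_of_row_lt (isBox_of_le hbox' (Nat.le_add_right _ _)) hi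
    omega

/-- Row strictness puts `w k` to the left of `w ℓ` in a row only if `k < ℓ`, which an inversion
forbids. -/
lemma HessInvT.Xlam_pow_succ_apply_eq_zero (hkl : HessInvT N lam h w k ℓ)
    (hrs : RowStrictT N lam w) (hN : lam.sum ≤ N) (m : ℕ) :
    (Xlam N lam ^ (m + 1)) (w k) (w ℓ) = 0 := by
  by_contra hne
  obtain ⟨i, j, hbox, hl, hl'⟩ := exists_of_Xlam_pow_succ_apply_ne_zero m hne
  exact (hrs.lt_of_col_lt hN (Nat.lt_add_of_pos_right m.succ_pos) hbox hl.symm hl'.symm).asymm hkl.1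

end HessInv

/-- For `k = n` the Springer condition `k + 1 ≤ h (r + 1) = r` on the entry `r` right of `ℓ`
cannot hold, so the box of `w ℓ` ends its row. -/
lemma SpringerInvT.Xlam_pow_succ_apply_eq_zero_of_last {n : ℕ} {lam : List ℕ}
    {w : Equiv.Perm (Fin (n + 1))} {ℓ : Fin (n + 1)}
    (hS : SpringerInvT (n + 1) lam w (Fin.last n) ℓ) (hN : lam.sum ≤ n + 1) (m : ℕ)
    (b : Fin (n + 1)) : (Xlam (n + 1) lam ^ (m + 1)) (w ℓ) b = 0 := by
  by_contra hne
  obtain ⟨i, j, hbox, hl, -⟩ := exists_of_Xlam_pow_succ_apply_ne_zero m hne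
  obtain ⟨-, -, -, il, jl, -, hl', -, labl, -, hlast⟩ := hS
  obtain ⟨rfl, rfl⟩ := baseLabel_injOn hl' (isBox_of_le hbox (Nat.le_add_right _ _))
    (labl.trans hl.symm)
  have hnext := isBox_of_le hbox (show jl + 1 ≤ jl + (m + 1) by omega)
  obtain ⟨r, hr⟩ := exists_apply_eq_baseLabel hN w hnext
  have := hlast r hnext hr
  simp only [Fin.val_last] at this
  omega

lemma permMat_eq_permMatrix {N : ℕ} (σ : Equiv.Perm (Fin N)) :
    permMat N σ = σ⁻¹.permMatrix ℂ := by
  ext a b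
  simp [permMat, PEquiv.toMatrix_apply, Equiv.eq_symm_apply, eq_comm]

lemma permMat_mul_mul_permMat_inv {N : ℕ} (σ : Equiv.Perm (Fin N))
    (M : Matrix (Fin N) (Fin N) ℂ) :
    permMat N σ * M * permMat N σ⁻¹ = M.submatrix ⇑σ⁻¹ ⇑σ⁻¹ := by
  rw [permMat_eq_permMatrix, permMat_eq_permMatrix, Equiv.Perm.permMatrix,
    Equiv.Perm.permMatrix, PEquiv.toMatrix_toPEquiv_mul, PEquiv.mul_toMatrix_toPEquiv,
    Matrix.submatrix_submatrix]
  rfl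

open Fin.NatCast in
lemma vPerm_apply_val {n i : ℕ} (hi : i ≤ n) (a : Fin (n + 1)) :
    (vPerm n i a : ℕ) =
      if (a : ℕ) < i then (a : ℕ) else if (a : ℕ) = n then i else (a : ℕ) + 1 := by
  induction hi using Nat.decreasingInduction with
  | self =>
    rw [vPerm, List.Ico.eq_nil_of_le le_rfl, List.map_nil, List.prod_nil]
    have := a.isLt
    split_ifs <;> simp <;> omega
  | of_succ i hi ih =>
    rw [vPerm, List.Ico.eq_cons hi, List.map_cons, List.prod_cons, ← vPerm,
      Equiv.Perm.mul_apply, Equiv.swap_apply_def]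
    have h1 : ((i : Fin (n + 1)) : ℕ) = i := Fin.val_cast_of_lt (by omega)
    have h2 : (((i + 1 : ℕ) : Fin (n + 1)) : ℕ) = i + 1 := Fin.val_cast_of_lt (by omega)
    have := a.isLt
    split_ifs at ih ⊢ <;> simp only [Fin.ext_iff, h1, h2] at * <;> omega

lemma vPerm_last {n i : ℕ} (hi : i ≤ n) : (vPerm n i (Fin.last n) : ℕ) = i := by
  simp [vPerm_apply_val hi]
  omega

lemma vPerm_lt_vPerm {n i : ℕ} (hi : i ≤ n) {a b : Fin (n + 1)} (hab : a < b)
    (hb : b ≠ Fin.last n) : vPerm n i a < vPerm n i b := by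
  rw [Fin.lt_def, vPerm_apply_val hi, vPerm_apply_val hi]
  rw [Fin.lt_def] at hab
  have : (b : ℕ) ≠ n := fun h => hb (Fin.ext h)
  split_ifs <;> omega

lemma IsUpperUnip.isUnit {N : ℕ} {g : Matrix (Fin N) (Fin N) ℂ} (hg : IsUpperUnip N g) :
    IsUnit g := by
  rw [Matrix.isUnit_iff_isUnit_det,
    Matrix.det_of_isUpperTriangular (M := g) fun _ _ h => hg.2 _ _ h]
  simp [hg.1]

lemma InUi.ext_of_row {N : ℕ} {i : Fin N} {u u' : Matrix (Fin N) (Fin N) ℂ} (hu : InUi N i u)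
    (hu' : InUi N i u') (hrow : ∀ b, u i b = u' i b) : u = u' := by
  ext a b
  by_cases ha : a = i
  · exact ha ▸ hrow b
  by_cases hab : a = b
  · rw [hab, hu.1.1, hu'.1.1]
  rw [not_imp_comm.1 (hu.2 a b hab) ha, not_imp_comm.1 (hu'.2 a b hab) ha]

lemma inUi_one_add {N : ℕ} {i : Fin N} {A : Matrix (Fin N) (Fin N) ℂ}
    (hA : ∀ a b, A a b ≠ 0 → a = i ∧ a < b) : InUi N i (1 + A) := by
  have hA' : ∀ a b, ¬ a < b → A a b = 0 := fun a b hab =>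
    not_imp_comm.1 (fun h => (hA a b h).2) hab
  refine ⟨⟨fun a => ?_, fun a b hba => ?_⟩, fun a b hab hne => ?_⟩
  · simp [hA' a a (lt_irrefl a)]
  · simp [hA' a b (not_lt.2 hba.le), Matrix.one_apply_ne (ne_of_gt hba)]
  · rw [Matrix.add_apply, Matrix.one_apply_ne hab, zero_add] at hne
    exact (hA a b hne).1

lemma inU0_submatrix {n : ℕ} {i : Fin (n + 1)} {M : Matrix (Fin (n + 1)) (Fin (n + 1)) ℂ}
    (hM : IsUpperUnip (n + 1) M) (hrow : ∀ b, b ≠ i → M i b = 0)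
    (hcol : ∀ a, a ≠ i → M a i = 0)
    {σ : Equiv.Perm (Fin (n + 1))} (hσ : σ (Fin.last n) = i)
    (hmono : ∀ a b, a < b → b ≠ Fin.last n → σ a < σ b) :
    InU0 n (M.submatrix σ σ) := by
  refine ⟨⟨fun a => hM.1 _, fun a b hba => ?_⟩, fun a ha => ?_⟩
  · simp only [Matrix.submatrix_apply]
    by_cases ha : a = Fin.last n
    · subst ha
      exact hσ ▸ hrow _ (hσ ▸ σ.injective.ne (ne_of_lt hba))
    · exact hM.2 _ _ (hmono b a hba ha)
  · simp only [Matrix.submatrix_apply, hσ]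
    exact hcol _ (hσ ▸ σ.injective.ne ha)

lemma mul_single_one_mul_apply {N : ℕ} (P Q : Matrix (Fin N) (Fin N) ℂ) (r s a b : Fin N) :
    (P * Matrix.single r s (1 : ℂ) * Q) a b = P a r * Q s b := by
  simp [Matrix.mul_apply, Matrix.single_apply, ite_and]

section BkMat

variable {n : ℕ} {lam : List ℕ} {w : Equiv.Perm (Fin (n + 1))} {k : Fin (n + 1)}
  {x : Fin (n + 1) → ℂ}

def bkHead (n : ℕ) (lam : List ℕ) (w : Equiv.Perm (Fin (n + 1))) (k : Fin (n + 1))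
    (x : Fin (n + 1) → ℂ) : Matrix (Fin (n + 1)) (Fin (n + 1)) ℂ :=
  ∑ ℓ : Fin (n + 1), if SpringerInvT (n + 1) lam w k ℓ then
    x ℓ • Matrix.single (w k) (w ℓ) (1 : ℂ) else 0

def bkTail (n : ℕ) (lam : List ℕ) (w : Equiv.Perm (Fin (n + 1))) (k : Fin (n + 1))
    (x : Fin (n + 1) → ℂ) : Matrix (Fin (n + 1)) (Fin (n + 1)) ℂ :=
  ∑ ℓ : Fin (n + 1), if SpringerInvT (n + 1) lam w k ℓ then
    x ℓ • ∑ m ∈ Finset.range n, Xlam (n + 1) lam ^ (m + 1) *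
      Matrix.single (w k) (w ℓ) (1 : ℂ) * (Xlam (n + 1) lam)ᵀ ^ (m + 1)
  else 0

lemma bkMat_eq_one_add_bkHead_add_bkTail :
    BkMat (n + 1) lam w k x = 1 + bkHead n lam w k x + bkTail n lam w k x := by
  rw [BkMat, add_assoc, bkHead, bkTail, ← Finset.sum_add_distrib]
  congr 1
  refine Finset.sum_congr rfl fun ℓ _ => ?_
  split_ifs
  · rw [← smul_add, Finset.sum_range_succ', pow_zero, pow_zero, one_mul, mul_one,
    add_comm (Matrix.single (w k) (w ℓ) (1 : ℂ))]
  · rw [add_zero]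

lemma bkHead_apply_ne_zero {a b : Fin (n + 1)} (h : bkHead n lam w k x a b ≠ 0) :
    a = w k ∧ ∃ ℓ, SpringerInvT (n + 1) lam w k ℓ ∧ b = w ℓ := by
  rw [bkHead, Matrix.sum_apply] at h
  obtain ⟨ℓ, -, hℓ⟩ := Finset.exists_ne_zero_of_sum_ne_zero h
  split_ifs at hℓ with hS
  · rw [Matrix.smul_apply, Matrix.single_apply] at hℓ
    split_ifs at hℓ with hab
    · exact ⟨hab.1.symm, ℓ, hS, hab.2.symm⟩
    · simp at hℓ
  · exact absurd rfl hℓ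

lemma bkTail_apply_ne_zero {a b : Fin (n + 1)} (h : bkTail n lam w k x a b ≠ 0) :
    ∃ ℓ, SpringerInvT (n + 1) lam w k ℓ ∧
      ∃ m, (Xlam (n + 1) lam ^ (m + 1)) a (w k) ≠ 0 ∧
        (Xlam (n + 1) lam ^ (m + 1)) b (w ℓ) ≠ 0 := by
  rw [bkTail, Matrix.sum_apply] at h
  obtain ⟨ℓ, -, hℓ⟩ := Finset.exists_ne_zero_of_sum_ne_zero h
  split_ifs at hℓ with hS
  · rw [Matrix.smul_apply, Matrix.sum_apply] at hℓ
    obtain ⟨m, -, hm⟩ := Finset.exists_ne_zero_of_sum_ne_zero (right_ne_zero_of_mul hℓ)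
    rw [← Matrix.transpose_pow, mul_single_one_mul_apply, Matrix.transpose_apply] at hm
    exact ⟨ℓ, hS, m, left_ne_zero_of_mul hm, right_ne_zero_of_mul hm⟩
  · exact absurd rfl hℓ

lemma inUi_one_add_bkHead : InUi (n + 1) (w k) (1 + bkHead n lam w k x) :=
  inUi_one_add fun a b h => by
    obtain ⟨rfl, ℓ, hS, rfl⟩ := bkHead_apply_ne_zero h
    exact ⟨rfl, hS.apply_lt⟩

lemma bkTail_apply_eq_zero_of_not_lt {a b : Fin (n + 1)} (hab : ¬ a < b) :
    bkTail n lam w k x a b = 0 := by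
  by_contra h
  obtain ⟨ℓ, hS, m, ha, hb⟩ := bkTail_apply_ne_zero h
  exact hab (hS.lt_of_Xlam_pow_succ_apply_ne_zero ha hb)

lemma bkTail_row_eq_zero (b : Fin (n + 1)) : bkTail n lam w k x (w k) b = 0 := by
  by_contra h
  obtain ⟨ℓ, -, m, ha, -⟩ := bkTail_apply_ne_zero h
  exact lt_irrefl _ (lt_of_Xlam_pow_succ_apply_ne_zero ha)

lemma bkTail_col_eq_zero (hrs : RowStrictT (n + 1) lam w) (hN : lam.sum ≤ n + 1)
    (a : Fin (n + 1)) : bkTail n lam w k x a (w k) = 0 := by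
  by_contra h
  obtain ⟨ℓ, hS, m, -, hb⟩ := bkTail_apply_ne_zero h
  exact hb (hS.Xlam_pow_succ_apply_eq_zero hrs hN m)

lemma isUpperUnip_one_add_bkTail : IsUpperUnip (n + 1) (1 + bkTail n lam w k x) :=
  ⟨fun a => by simp [bkTail_apply_eq_zero_of_not_lt (lt_irrefl a)], fun a b hba => by
    simp [bkTail_apply_eq_zero_of_not_lt (not_lt.2 hba.le), Matrix.one_apply_ne (ne_of_gt hba)]⟩

lemma bkHead_mul_bkTail (hN : lam.sum ≤ n + 1) :
    bkHead n lam w (Fin.last n) x * bkTail n lam w (Fin.last n) x = 0 := by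
  ext a b
  rw [Matrix.mul_apply, Matrix.zero_apply]
  refine Finset.sum_eq_zero fun c _ => ?_
  by_cases hc : bkHead n lam w (Fin.last n) x a c = 0
  · rw [hc, zero_mul]
  obtain ⟨-, ℓ, hS, rfl⟩ := bkHead_apply_ne_zero hc
  suffices bkTail n lam w (Fin.last n) x (w ℓ) b = 0 by rw [this, mul_zero]
  by_contra h
  obtain ⟨-, -, m, ha, -⟩ := bkTail_apply_ne_zero h
  exact ha (hS.Xlam_pow_succ_apply_eq_zero_of_last hN m _)

lemma bkMat_last_eq_mul (hN : lam.sum ≤ n + 1) :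
    BkMat (n + 1) lam w (Fin.last n) x =
      (1 + bkHead n lam w (Fin.last n) x) * (1 + bkTail n lam w (Fin.last n) x) := by
  rw [bkMat_eq_one_add_bkHead_add_bkTail, mul_add, mul_one, add_mul, one_mul,
    bkHead_mul_bkTail hN, add_zero]

end BkMat

theorem stmt13_general (n : ℕ) (lam : List ℕ) (hn : lam.sum = n + 1)
    (w v : Equiv.Perm (Fin (n+1))) (hv : v = vPerm n (w (Fin.last n) : ℕ))
    (hrs : RowStrictT (n+1) lam w)
    (x : Fin (n+1) → ℂ) :
    ∃! ub : Matrix (Fin (n+1)) (Fin (n+1)) ℂ × Matrix (Fin (n+1)) (Fin (n+1)) ℂ,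
      InUi (n+1) (w (Fin.last n)) ub.1 ∧
      (∃ u0, InU0 n u0 ∧ ub.2 = permMat (n+1) v * u0 * permMat (n+1) v⁻¹) ∧
      BkMat (n+1) lam w (Fin.last n) x = ub.1 * ub.2 ∧
      (∀ b : Fin (n+1),
        ub.1 (w (Fin.last n)) b = BkMat (n+1) lam w (Fin.last n) x (w (Fin.last n)) b) := by
  set i := w (Fin.last n)
  set u := 1 + bkHead n lam w (Fin.last n) x
  set b := 1 + bkTail n lam w (Fin.last n) x
  have hu : InUi (n + 1) i u := inUi_one_add_bkHead
  have hfac : BkMat (n + 1) lam w (Fin.last n) x = u * b := bkMat_last_eq_mul hn.le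
  have hrow : ∀ c, u i c = BkMat (n + 1) lam w (Fin.last n) x i c := fun c => by
    simp [bkMat_eq_one_add_bkHead_add_bkTail, u, i, bkTail_row_eq_zero]
  have hi : (i : ℕ) ≤ n := Nat.lt_succ_iff.1 i.isLt
  have hb : InU0 n (b.submatrix v v) := by
    subst hv
    refine inU0_submatrix isUpperUnip_one_add_bkTail (fun c hc => ?_) (fun c hc => ?_)
      (Fin.ext (vPerm_last hi)) (fun _ _ => vPerm_lt_vPerm hi)
    · simp [i, bkTail_row_eq_zero, Matrix.one_apply_ne hc.symm]
    · simp [i, bkTail_col_eq_zero hrs hn.le, Matrix.one_apply_ne hc]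
  refine ⟨(u, b), ⟨hu, ⟨b.submatrix v v, hb, ?_⟩, hfac, hrow⟩, ?_⟩
  · simp [permMat_mul_mul_permMat_inv]
  · rintro ⟨u', b'⟩ ⟨hu', -, hfac', hrow'⟩
    obtain rfl : u' = u := hu'.ext_of_row hu fun c => (hrow' c).trans (hrow c).symm
    exact Prod.ext rfl (hu.1.isUnit.mul_left_cancel (hfac'.symm.trans hfac))

/-- every `g_n ∈ B_n(w)` factors uniquely as `g_n = u_i · b_n` with `u_i ∈ U_i`
(`i = w(n)`), `b_n ∈ v U_0 v⁻¹`, and the `i`-th row of `u_i` equal to the `i`-th row of `g_n`. -/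
theorem stmt13 (n : ℕ) (lam : List ℕ) (hn : lam.sum = n + 1)
    (w v : Equiv.Perm (Fin (n+1))) (hv : v = vPerm n (w (Fin.last n) : ℕ))
    (hrs : RowStrictT (n+1) lam w)
    (x : Fin (n+1) → ℂ)
    (hx : ∀ ℓ, ¬ SpringerInvT (n+1) lam w (Fin.last n) ℓ → x ℓ = 0) :
    ∃! ub : Matrix (Fin (n+1)) (Fin (n+1)) ℂ × Matrix (Fin (n+1)) (Fin (n+1)) ℂ,
      InUi (n+1) (w (Fin.last n)) ub.1 ∧
      (∃ u0, InU0 n u0 ∧ ub.2 = permMat (n+1) v * u0 * permMat (n+1) v⁻¹) ∧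
      BkMat (n+1) lam w (Fin.last n) x = ub.1 * ub.2 ∧
      (∀ b : Fin (n+1),
        ub.1 (w (Fin.last n)) b = BkMat (n+1) lam w (Fin.last n) x (w (Fin.last n)) b) :=
  stmt13_general n lam hn w v hv hrs x
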